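/- There is an absolute constant C > 0 such that the following holds. Let F be a class of functions from a set X to [0,1], β > 0, and z₁,…,z_N ∈ X an arbitrary sequence; define Z₀ = ∅, Z_k = (z₁,…,z_k), and b_k(x) = sup{|f(x) − f'(x)| : f, f' ∈ F, ‖f − f'‖_{Z_{k−1}} ≤ β}. Then Σ_{k=1}^N b_k(z_k) ≤ 1 + dim_E(F, 1/N) + C·β·√(dim_E(F, 1/N)·N). -/

import Mathlib

open MeasureTheory

/-- `‖f‖_Z` for a finite sequence `Z` of points: `(Σ_{z∈Z} f(z)²)^{1/2}`. -/
noncomputable def seqNorm {X : Type*} (Z : List X) (f : X → ℝ) : ℝ :=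
  Real.sqrt ((Z.map fun z => (f z) ^ 2).sum)

/-- `x` is `ε`-dependent on the finite sequence `Z` with respect to `F`. -/
def EpsDependent {X : Type*} (F : Set (X → ℝ)) (ε : ℝ) (Z : List X) (x : X) : Prop :=
  ∀ f ∈ F, ∀ f' ∈ F, seqNorm Z (fun y => f y - f' y) ≤ ε → |f x - f' x| ≤ ε

/-- The `ε`-eluder dimension `dim_E(F, ε)`: the length of the longest sequence of points
such that, for some `ε' ≥ ε`, every element is `ε'`-independent of its predecessors. -/
noncomputable def eluderDim {X : Type*} (F : Set (X → ℝ)) (ε : ℝ) : ℕ∞ :=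
  sSup {n : ℕ∞ | ∃ L : List X, (L.length : ℕ∞) = n ∧ ∃ ε' ≥ ε,
    ∀ i : Fin L.length, ¬ EpsDependent F ε' (L.take i) (L.get i)}

/-- The bonus function `b(x) = sup{ |f(x) − f'(x)| : f, f' ∈ F, ‖f − f'‖_Z ≤ β }`. -/
noncomputable def bonus {X : Type*} (F : Set (X → ℝ)) (β : ℝ) (Z : List X) (x : X) : ℝ :=
  sSup {v : ℝ | ∃ f ∈ F, ∃ f' ∈ F, seqNorm Z (fun y => f y - f' y) ≤ β ∧ v = |f x - f' x|}

/-!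
Each point `z_k` whose bonus exceeds `ε` is put greedily into one of `m > β²/ε²` buckets, on
whose current content it is `ε`-independent. Each bucket is then an `ε`-independent sequence,
hence has length at most `D` when `ε ≥ 1/N`, so at most `(β²/ε² + 1) D` bonuses exceed `ε`.
Thus the `t`-th largest bonus is at most `1/N + β √(D / (t + 1 - D))` for `t ≥ D`, and summing
with `∑ 1/√s ≤ 2√N` gives the bound with `C = 2`.
-/

open Finset

theorem Finset.sum_le_sum_range_of_card_lt_le {ι α : Type*} [AddCommMonoid α] [LinearOrder α]
    [IsOrderedAddMonoid α] (s : Finset ι) (w : ι → α) (c : ℕ → α)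
    (h : ∀ t < #s, #{i ∈ s | c t < w i} ≤ t) :
    ∑ i ∈ s, w i ≤ ∑ t ∈ range #s, c t := by
  classical
  obtain ⟨n, hn⟩ : ∃ n, #s = n := ⟨_, rfl⟩
  rw [hn] at h ⊢
  induction n generalizing s c with
  | zero => simp [card_eq_zero.1 hn]
  | succ n ih =>
    obtain ⟨i₀, hi₀, hmax⟩ := s.exists_max_image w (card_pos.1 (hn ▸ n.succ_pos))
    have hc₀ : w i₀ ≤ c 0 := by
      by_contra! hlt
      exact (card_pos.2 ⟨i₀, mem_filter.2 ⟨hi₀, hlt⟩⟩).ne' (Nat.le_zero.1 (h 0 n.succ_pos))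
    have hrest : ∑ i ∈ s.erase i₀, w i ≤ ∑ t ∈ range n, c (t + 1) := by
      refine ih (s.erase i₀) (fun t => c (t + 1)) (fun t ht => ?_)
        (by rw [card_erase_of_mem hi₀, hn]; rfl)
      by_cases hlt : c (t + 1) < w i₀
      · rw [filter_erase, card_erase_of_mem (mem_filter.2 ⟨hi₀, hlt⟩)]
        have := h (t + 1) (by omega)
        omega
      · rw [filter_false_of_mem fun i hi =>
          not_lt.2 ((hmax i (mem_of_mem_erase hi)).trans (not_lt.1 hlt))]
        simp
    calc ∑ i ∈ s, w i = w i₀ + ∑ i ∈ s.erase i₀, w i := (add_sum_erase s w hi₀).symm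
      _ ≤ c 0 + ∑ t ∈ range n, c (t + 1) := add_le_add hc₀ hrest
      _ = ∑ t ∈ range (n + 1), c t := by rw [sum_range_succ', add_comm]

theorem Multiset.sum_map_le_sum_map_of_le {α M : Type*} [AddCommMonoid M] [PartialOrder M]
    [IsOrderedAddMonoid M] {s t : Multiset α} (hst : s ≤ t) {g : α → M} (hg : ∀ a, 0 ≤ g a) :
    (s.map g).sum ≤ (t.map g).sum := by
  obtain ⟨u, rfl⟩ := Multiset.le_iff_exists_add.1 hst
  rw [Multiset.map_add, Multiset.sum_add]
  exact le_add_of_nonneg_right (Multiset.sum_nonneg fun a ha => by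
    obtain ⟨b, -, rfl⟩ := Multiset.mem_map.1 ha
    exact hg b)

theorem sum_range_one_div_sqrt_le (n : ℕ) : ∑ k ∈ range n, 1 / √(k + 1) ≤ 2 * √n := by
  have hterm : ∀ k : ℕ, 1 / √(k + 1) ≤ 2 * √((k + 1 : ℕ) : ℝ) - 2 * √k := by
    intro k
    have ha := Real.sq_sqrt k.cast_nonneg
    have hb := Real.sq_sqrt (k + 1 : ℕ).cast_nonneg
    have hb0 : 0 < √((k + 1 : ℕ) : ℝ) := Real.sqrt_pos.2 (by positivity)
    push_cast at hb hb0 ⊢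
    rw [div_le_iff₀ hb0]
    nlinarith [sq_nonneg (√(k : ℝ) - √((k : ℝ) + 1))]
  calc ∑ k ∈ range n, 1 / √(k + 1) ≤ ∑ k ∈ range n, (2 * √((k + 1 : ℕ) : ℝ) - 2 * √k) :=
        sum_le_sum fun k _ => hterm k
    _ = 2 * √n := (sum_range_sub (fun k : ℕ => 2 * √(k : ℝ)) n).trans (by simp)

def EpsIndependentSeq {X : Type*} (F : Set (X → ℝ)) (ε : ℝ) (L : List X) : Prop :=
  ∀ i : Fin L.length, ¬ EpsDependent F ε (L.take i) (L.get i)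

section Eluder

variable {X : Type*} {F : Set (X → ℝ)} {ε β : ℝ}

theorem EpsIndependentSeq.nil : EpsIndependentSeq F ε [] := fun i => i.elim0

theorem EpsIndependentSeq.append_singleton {L : List X} {x : X} (hL : EpsIndependentSeq F ε L)
    (hx : ¬ EpsDependent F ε L x) : EpsIndependentSeq F ε (L ++ [x]) := by
  rintro ⟨i, hi⟩
  rw [List.length_append, List.length_singleton] at hi
  rcases (Nat.lt_succ_iff.1 hi).lt_or_eq with hi | rfl
  · simpa [List.take_append_of_le_length hi.le, List.getElem_append_left hi] using hL ⟨i, hi⟩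
  · simpa using hx

theorem length_le_eluderDim {ε₀ : ℝ} {L : List X} (hε : ε₀ ≤ ε) (hL : EpsIndependentSeq F ε L) :
    (L.length : ℕ∞) ≤ eluderDim F ε₀ :=
  le_sSup ⟨L, rfl, ε, hε, hL⟩

theorem sq_seqNorm (Z : List X) (g : X → ℝ) :
    seqNorm Z g ^ 2 = (Z.map fun z => g z ^ 2).sum :=
  Real.sq_sqrt (List.sum_nonneg fun _ ha => by
    obtain ⟨z, -, rfl⟩ := List.mem_map.1 ha
    positivity)

theorem bonus_le_one (hF : ∀ f ∈ F, ∀ x, f x ∈ Set.Icc (0 : ℝ) 1) (β : ℝ) (Z : List X) (x : X) :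
    bonus F β Z x ≤ 1 := by
  refine Real.sSup_le ?_ zero_le_one
  rintro v ⟨f, hf, f', hf', -, rfl⟩
  obtain ⟨h₀, h₁⟩ := hF f hf x
  obtain ⟨h₀', h₁'⟩ := hF f' hf' x
  exact abs_le.2 ⟨by linarith, by linarith⟩

theorem exists_of_lt_bonus {Z : List X} {x : X} (hε : 0 ≤ ε) (h : ε < bonus F β Z x) :
    ∃ f ∈ F, ∃ f' ∈ F, seqNorm Z (fun y => f y - f' y) ≤ β ∧ ε < |f x - f' x| := by
  have hne : {v : ℝ | ∃ f ∈ F, ∃ f' ∈ F, seqNorm Z (fun y => f y - f' y) ≤ β ∧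
      v = |f x - f' x|}.Nonempty := by
    by_contra hempty
    rw [bonus, Set.not_nonempty_iff_eq_empty.1 hempty, Real.sSup_empty] at h
    exact h.not_ge hε
  obtain ⟨_, ⟨f, hf, f', hf', hZ, rfl⟩, hv⟩ := exists_lt_of_lt_csSup hne h
  exact ⟨f, hf, f', hf', hZ, hv⟩

theorem sum_coe_update_append {m : ℕ} (B : Fin m → List X) (j : Fin m) (x : X) :
    ∑ i, ((Function.update B j (B j ++ [x]) i : List X) : Multiset X)
      = ∑ i, (B i : Multiset X) + {x} := by
  have h : ∀ i, ((Function.update B j (B j ++ [x]) i : List X) : Multiset X)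
      = B i + if i = j then {x} else 0 := by
    intro i
    rcases eq_or_ne i j with rfl | hij
    · simp [← Multiset.coe_add]
    · simp [hij]
  simp [h, sum_add_distrib]

/-- The buckets `B j` are disjoint pieces of `Z`, so the squared norms of `f - f'` over them add up
to at most `β ^ 2 < m * ε ^ 2`: on some bucket the norm is at most `ε`. -/
theorem exists_not_epsDependent_of_lt_bonus {m : ℕ} {B : Fin m → List X} {Z : List X} {x : X}
    (hε : 0 ≤ ε) (hm : β ^ 2 < m * ε ^ 2) (hB : ∑ j, (B j : Multiset X) ≤ Z)
    (hx : ε < bonus F β Z x) : ∃ j, ¬ EpsDependent F ε (B j) x := by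
  obtain ⟨f, hf, f', hf', hZ, hfx⟩ := exists_of_lt_bonus hε hx
  by_contra! hdep
  set g : X → ℝ := fun y => (f y - f' y) ^ 2
  have hBj : ∀ j, ε ^ 2 < ((B j).map g).sum := fun j =>
    (Real.lt_sqrt hε).1 (lt_of_not_ge fun h => (hdep j f hf f' hf' h).not_gt hfx)
  have hbuckets : ∑ j, ((B j).map g).sum ≤ (Z.map g).sum := by
    have := Multiset.sum_map_le_sum_map_of_le hB (g := g) fun _ => sq_nonneg _
    have hsum : ((∑ j, (B j : Multiset X)).map g).sum = ∑ j, ((B j : Multiset X).map g).sum :=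
      map_sum (Multiset.sumAddMonoidHom.comp (Multiset.mapAddMonoidHom g)) _ _
    rw [hsum] at this
    simpa using this
  have hZg : (Z.map g).sum ≤ β ^ 2 := by
    rw [← sq_seqNorm]
    exact pow_le_pow_left₀ (Real.sqrt_nonneg _) hZ 2
  have hlower : (m : ℝ) * ε ^ 2 ≤ ∑ j, ((B j).map g).sum := by
    simpa using sum_le_sum fun j (_ : j ∈ univ) => (hBj j).le
  linarith

theorem exists_epsIndependentSeq_buckets {m : ℕ} (hε : 0 ≤ ε) (hm : β ^ 2 < m * ε ^ 2) {n : ℕ}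
    (z : Fin n → X) :
    ∃ B : Fin m → List X, (∀ j, EpsIndependentSeq F ε (B j)) ∧
      ∑ j, (B j : Multiset X) ≤ List.ofFn z ∧
      #{k : Fin n | ε < bonus F β ((List.ofFn z).take k) (z k)}
        ≤ Multiset.card (∑ j, (B j : Multiset X)) := by
  induction n with
  | zero => exact ⟨fun _ => [], fun _ => .nil, by simp, by simp⟩
  | succ n ih =>
    obtain ⟨B, hBind, hBle, hcount⟩ := ih fun k => z k.castSucc
    set Z := List.ofFn fun k : Fin n => z k.castSucc
    set x := z (Fin.last n)
    have hz : List.ofFn z = Z ++ [x] := (List.ofFn_succ' z).trans List.concat_eq_append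
    have hcount' : #{k : Fin (n + 1) | ε < bonus F β ((List.ofFn z).take k) (z k)}
        = #{k : Fin n | ε < bonus F β (Z.take k) (z k.castSucc)}
          + if ε < bonus F β Z x then 1 else 0 := by
      simp only [card_filter, Fin.sum_univ_castSucc, hz, Fin.val_castSucc, Fin.val_last]
      simp [List.take_append_of_le_length, Z, x]
    by_cases hx : ε < bonus F β Z x
    · obtain ⟨j, hj⟩ := exists_not_epsDependent_of_lt_bonus hε hm hBle hx
      refine ⟨Function.update B j (B j ++ [x]), fun i => ?_, ?_, ?_⟩
      · rcases eq_or_ne i j with rfl | hij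
        · simpa using (hBind i).append_singleton hj
        · simpa [hij] using hBind i
      · rw [sum_coe_update_append, hz, ← Multiset.coe_add]
        exact add_le_add_left hBle _
      · rw [hcount', if_pos hx, sum_coe_update_append, Multiset.card_add]
        simpa using hcount
    · refine ⟨B, hBind, hBle.trans ?_, by rw [hcount', if_neg hx, add_zero]; exact hcount⟩
      rw [hz, ← Multiset.coe_add]
      exact le_add_right le_rfl

theorem card_lt_bonus_le {m D : ℕ} (hε : 0 ≤ ε) (hm : β ^ 2 < m * ε ^ 2)
    (hD : ∀ L, EpsIndependentSeq F ε L → L.length ≤ D) {n : ℕ} (z : Fin n → X) :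
    #{k : Fin n | ε < bonus F β ((List.ofFn z).take k) (z k)} ≤ m * D := by
  obtain ⟨B, hB, -, hcount⟩ := exists_epsIndependentSeq_buckets hε hm z
  calc _ ≤ Multiset.card (∑ j, (B j : Multiset X)) := hcount
    _ = ∑ j, (B j).length := by simp [Multiset.card_sum]
    _ ≤ ∑ _j : Fin m, D := sum_le_sum fun j _ => hD _ (hB j)
    _ = m * D := by simp

end Eluder

/-- Bound on the `t`-th largest bonus, counting from `0`. -/
noncomputable def bonusRankBound (N D : ℕ) (β : ℝ) (t : ℕ) : ℝ :=
  if t < D then 1 else 1 / N + β * √(D / ((t - D : ℕ) + 1))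

theorem floor_sq_div_sq_add_one_mul_le {β ε : ℝ} {D t : ℕ} (hβ : 0 ≤ β) (hDt : D ≤ t)
    (hε : β * √(D / ((t - D : ℕ) + 1)) < ε) : (⌊β ^ 2 / ε ^ 2⌋₊ + 1) * D ≤ t := by
  rcases D.eq_zero_or_pos with rfl | hD
  · simp
  set M : ℝ := (t - D : ℕ) + 1 with hM_def
  have hM : 0 < M := by positivity
  have hε₀ : 0 < ε := lt_of_le_of_lt (by positivity) hε
  have hsq : β ^ 2 * D / M < ε ^ 2 := by
    have := pow_lt_pow_left₀ hε (by positivity) two_ne_zero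
    rwa [mul_pow, Real.sq_sqrt (by positivity), ← mul_div_assoc] at this
  have hfloor : (⌊β ^ 2 / ε ^ 2⌋₊ : ℝ) * D < M := by
    calc (⌊β ^ 2 / ε ^ 2⌋₊ : ℝ) * D ≤ β ^ 2 / ε ^ 2 * D := by
          gcongr; exact Nat.floor_le (by positivity)
      _ < M := by
          rw [div_mul_eq_mul_div, div_lt_iff₀ (by positivity)]
          rw [div_lt_iff₀ hM] at hsq
          linarith
  rw [hM_def] at hfloor
  have : ⌊β ^ 2 / ε ^ 2⌋₊ * D < t - D + 1 := by exact_mod_cast hfloor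
  rw [add_one_mul]
  omega

theorem sum_bonusRankBound_le (N D : ℕ) {β : ℝ} (hβ : 0 ≤ β) :
    ∑ t ∈ range N, bonusRankBound N D β t ≤ 1 + D + 2 * β * √(D * N) := by
  set h : ℕ → ℝ := fun s => β * √(D / (s + 1))
  have hsplit : ∀ t, bonusRankBound N D β t
      ≤ ((if t < D then 1 else 0) + 1 / N) + if t < D then 0 else h (t - D) := by
    intro t
    unfold bonusRankBound
    split_ifs
    · simp
    · simp [h]
  have hlarge : ∑ t ∈ range N, (if t < D then (1 : ℝ) else 0) ≤ D := by
    rw [sum_boole]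
    exact_mod_cast (card_le_card fun t ht => by simpa using (mem_filter.1 ht).2).trans_eq
      (card_range D)
  have hsmall : ∑ _t ∈ range N, 1 / (N : ℝ) ≤ 1 := by
    rw [sum_const, card_range, nsmul_eq_mul, mul_one_div]
    exact div_self_le_one _
  have htail : ∑ t ∈ range N, (if t < D then 0 else h (t - D)) ≤ 2 * β * √(D * N) := by
    calc ∑ t ∈ range N, (if t < D then 0 else h (t - D))
        ≤ ∑ t ∈ range (D + N), (if t < D then 0 else h (t - D)) :=
          sum_le_sum_of_subset_of_nonneg (range_mono (Nat.le_add_left N D))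
            fun t _ _ => by split_ifs <;> positivity
      _ = β * √D * ∑ s ∈ range N, 1 / √(s + 1) := by
          rw [sum_range_add, sum_eq_zero fun t ht => if_pos (mem_range.1 ht), zero_add, mul_sum]
          refine sum_congr rfl fun s _ => ?_
          simp only [h, add_lt_iff_neg_left, not_lt_zero, if_false, Nat.add_sub_cancel_left]
          rw [Real.sqrt_div D.cast_nonneg]
          ring
      _ ≤ β * √D * (2 * √N) := by gcongr; exact sum_range_one_div_sqrt_le N
      _ = 2 * β * √(D * N) := by rw [Real.sqrt_mul D.cast_nonneg]; ring
  calc ∑ t ∈ range N, bonusRankBound N D β t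
      ≤ ∑ t ∈ range N, (((if t < D then 1 else 0) + 1 / N) + if t < D then 0 else h (t - D)) :=
        sum_le_sum fun t _ => hsplit t
    _ ≤ 1 + D + 2 * β * √(D * N) := by
        rw [sum_add_distrib, sum_add_distrib]
        linarith

theorem card_lt_bonus_le_rank {X : Type*} {F : Set (X → ℝ)}
    (hF : ∀ f ∈ F, ∀ x, f x ∈ Set.Icc (0 : ℝ) 1) {β : ℝ} (hβ : 0 ≤ β) {N D : ℕ}
    (hD : eluderDim F (1 / N) = D) (z : Fin N → X) {t : ℕ} (ht : t < N) :
    #{k : Fin N | bonusRankBound N D β t < bonus F β ((List.ofFn z).take k) (z k)} ≤ t := by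
  unfold bonusRankBound
  split_ifs with htD
  · simp [filter_false_of_mem fun k _ => not_lt.2 (bonus_le_one hF β _ (z k))]
  set ε := 1 / (N : ℝ) + β * √(D / ((t - D : ℕ) + 1))
  have hN : 0 < 1 / (N : ℝ) := one_div_pos.2 (Nat.cast_pos.2 (by omega))
  have hεN : 1 / (N : ℝ) ≤ ε := le_add_of_nonneg_right (by positivity)
  have hm : β ^ 2 < (⌊β ^ 2 / ε ^ 2⌋₊ + 1 : ℕ) * ε ^ 2 := by
    have := Nat.lt_floor_add_one (β ^ 2 / ε ^ 2)
    rw [div_lt_iff₀ (by positivity)] at this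
    exact_mod_cast this
  refine (card_lt_bonus_le (hN.trans_le hεN).le hm (fun L hL => ?_) z).trans
    (floor_sq_div_sq_add_one_mul_le hβ (not_lt.1 htD) (lt_add_of_pos_left _ hN))
  exact_mod_cast (length_le_eluderDim hεN hL).trans_eq hD

/-- there is an absolute constant `C > 0` such that
`Σ_{k=1}^N b_k(z_k) ≤ 1 + dim_E(F, 1/N) + C·β·√(dim_E(F, 1/N)·N)`. -/
theorem stmt4 :
    ∃ C : ℝ, 0 < C ∧
      ∀ (X : Type*) (F : Set (X → ℝ)),
        (∀ f ∈ F, ∀ x, f x ∈ Set.Icc (0 : ℝ) 1) →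
        ∀ β : ℝ, 0 < β →
        ∀ (N : ℕ) (z : Fin N → X) (D : ℕ), eluderDim F (1 / N) = (D : ℕ∞) →
        ∑ k : Fin N, bonus F β ((List.ofFn z).take k) (z k)
          ≤ 1 + (D : ℝ) + C * β * Real.sqrt ((D : ℝ) * N) := by
  refine ⟨2, two_pos, fun X F hF β hβ N z D hD => ?_⟩
  calc ∑ k : Fin N, bonus F β ((List.ofFn z).take k) (z k)
      ≤ ∑ t ∈ range N, bonusRankBound N D β t := by
        simpa using sum_le_sum_range_of_card_lt_le univ _ _ fun t ht =>
          card_lt_bonus_le_rank hF hβ.le hD z (by simpa using ht)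
    _ ≤ 1 + D + 2 * β * √(D * N) := sum_bonusRankBound_le N D hβ.le
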